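/- arXiv:1708.07298 — 3 statements merged into one kernel-verified Lean document; each statement's English description precedes it below -/
import Mathlib

section
/- The reduction formula in the third parameter holds: for γ ≠ 0 and α ≠ 0, E_{α,β}^{γ+1}(z) = [E_{α,β−1}^γ(z) + (1 − β + αγ) E_{α,β}^γ(z)] / (αγ) for all z ∈ ℂ. -/
/-!
Termwise the identity is `γ (γ + 1)_k = (γ)_k (γ + k)` combined with `Γ(s) = (s - 1) Γ(s - 1)`;
the work is the convergence of the three series when `0 < Re α`. Euler's product for `Γ` gives
`Γ(x) ≤ |Γ(x + iy)| exp(y² / x)` for `x ≥ 1`, so the `k`-th term is at most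
`Q^k / Γ(k Re α + Re β)` for some `Q`, and log-convexity of `Γ` shows that `Γ(x + a) / Γ(x) → ∞`,
so the ratio test applies to this majorant.
-/

open scoped Real
open Complex Filter

/-- The Prabhakar (three-parameter Mittag-Leffler) function, defined by its
entire power series, with reciprocal Gamma understood as `0` at poles. -/
noncomputable def prabhakar (α β γ z : ℂ) : ℂ :=
  ∑' k : ℕ, (ascPochhammer ℂ k).eval γ * z ^ k / ((Nat.factorial k : ℂ) * Complex.Gamma (α * k + β))

open Finset

lemma sum_inv_sq_add_natCast_le {x : ℝ} (hx : 1 ≤ x) (n : ℕ) :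
    ∑ j ∈ range n, ((x + j) ^ 2)⁻¹ ≤ 2 / x := by
  suffices h : ∑ j ∈ range n, ((x + j) ^ 2)⁻¹ ≤ 2 / x - 2 / (x + n) from
    h.trans (sub_le_self _ (by positivity))
  induction n with
  | zero => simp
  | succ n ih =>
    have hxn : 1 ≤ x + n := by linarith [n.cast_nonneg (α := ℝ)]
    have step : ((x + n) ^ 2)⁻¹ ≤ 2 / (x + n) - 2 / (x + n + 1) := by
      rw [div_sub_div _ _ (by positivity) (by positivity), le_div_iff₀ (by positivity)]
      field_simp
      nlinarith
    rw [sum_range_succ, Nat.cast_succ, ← add_assoc]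
    linarith

lemma Complex.sq_norm_le_sq_re_mul_exp (w : ℂ) (hw : w.re ≠ 0) :
    ‖w‖ ^ 2 ≤ w.re ^ 2 * Real.exp (w.im ^ 2 / w.re ^ 2) :=
  calc ‖w‖ ^ 2 = w.re ^ 2 * (w.im ^ 2 / w.re ^ 2 + 1) := by
        rw [Complex.sq_norm, Complex.normSq_apply]; field_simp; ring
    _ ≤ w.re ^ 2 * Real.exp (w.im ^ 2 / w.re ^ 2) := by
        gcongr; exact Real.add_one_le_exp _

lemma Complex.norm_prod_add_natCast_le (s : ℂ) (hs : 1 ≤ s.re) (n : ℕ) :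
    ‖∏ j ∈ range n, (s + j)‖ ≤ (∏ j ∈ range n, (s.re + j)) * Real.exp (s.im ^ 2 / s.re) := by
  have hsq : ‖∏ j ∈ range n, (s + j)‖ ^ 2 ≤
      ((∏ j ∈ range n, (s.re + j)) * Real.exp (s.im ^ 2 / s.re)) ^ 2 :=
    calc ‖∏ j ∈ range n, (s + j)‖ ^ 2 = ∏ j ∈ range n, ‖s + j‖ ^ 2 := by rw [norm_prod, prod_pow]
      _ ≤ ∏ j ∈ range n, ((s.re + j) ^ 2 * Real.exp (s.im ^ 2 / (s.re + j) ^ 2)) := by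
        gcongr with j
        simpa using Complex.sq_norm_le_sq_re_mul_exp (s + j)
          (by simp only [add_re, natCast_re]; positivity)
      _ = (∏ j ∈ range n, (s.re + j)) ^ 2 *
            Real.exp (s.im ^ 2 * ∑ j ∈ range n, ((s.re + j) ^ 2)⁻¹) := by
        simp only [prod_mul_distrib, prod_pow, ← Real.exp_sum, mul_sum, div_eq_mul_inv]
      _ ≤ (∏ j ∈ range n, (s.re + j)) ^ 2 * Real.exp (2 * (s.im ^ 2 / s.re)) := by
        refine mul_le_mul_of_nonneg_left (Real.exp_le_exp.mpr ?_) (by positivity)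
        calc s.im ^ 2 * ∑ j ∈ range n, ((s.re + j) ^ 2)⁻¹ ≤ s.im ^ 2 * (2 / s.re) := by
              gcongr; exact sum_inv_sq_add_natCast_le hs n
          _ = 2 * (s.im ^ 2 / s.re) := by ring
      _ = ((∏ j ∈ range n, (s.re + j)) * Real.exp (s.im ^ 2 / s.re)) ^ 2 := by
        rw [mul_pow, ← Real.exp_nat_mul]; norm_num
  exact (pow_le_pow_iff_left₀ (norm_nonneg _) (by positivity) two_ne_zero).mp hsq

lemma Real.Gamma_re_le_norm_Gamma_mul_exp (s : ℂ) (hs : 1 ≤ s.re) :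
    Real.Gamma s.re ≤ ‖Complex.Gamma s‖ * Real.exp (s.im ^ 2 / s.re) := by
  have hseq (n : ℕ) :
      Real.GammaSeq s.re n ≤ ‖Complex.GammaSeq s n‖ * Real.exp (s.im ^ 2 / s.re) := by
    have hP : 0 < ∏ j ∈ range (n + 1), (s.re + j) := prod_pos fun j _ => by positivity
    have hPs : 0 < ‖∏ j ∈ range (n + 1), (s + j)‖ :=
      norm_pos_iff.mpr <| prod_ne_zero_iff.mpr fun j _ h => by
        have := congrArg Complex.re h
        simp only [add_re, natCast_re, zero_re] at this
        linarith [j.cast_nonneg (α := ℝ)]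
    have hN : 0 ≤ (n : ℝ) ^ s.re * n.factorial := by positivity
    rw [Real.GammaSeq, Complex.GammaSeq, norm_div, norm_mul,
      norm_natCast_cpow_of_re_ne_zero n (by linarith), Complex.norm_natCast,
      div_mul_eq_mul_div, div_le_div_iff₀ hP hPs]
    calc _ ≤ (n : ℝ) ^ s.re * n.factorial *
            ((∏ j ∈ range (n + 1), (s.re + j)) * Real.exp (s.im ^ 2 / s.re)) :=
        mul_le_mul_of_nonneg_left (Complex.norm_prod_add_natCast_le s hs (n + 1)) hN
      _ = _ := by ring
  exact le_of_tendsto_of_tendsto' (Real.GammaSeq_tendsto_Gamma _)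
    ((Complex.GammaSeq_tendsto_Gamma s).norm.mul_const _) hseq

lemma Real.Gamma_mul_rpow_le_Gamma_add {a x : ℝ} (ha₀ : 0 < a) (ha₁ : a ≤ 1) (hx : 1 - a < x) :
    Real.Gamma x * (x + a - 1) ^ a ≤ Real.Gamma (x + a) := by
  have hw : 0 < x + a - 1 := by linarith
  rcases ha₁.eq_or_lt with rfl | ha₁
  · rw [Real.rpow_one, add_sub_cancel_right, Real.Gamma_add_one (by linarith), mul_comm]
  have hGw : Real.Gamma (x + a) = (x + a - 1) * Real.Gamma (x + a - 1) := by
    simpa using Real.Gamma_add_one hw.ne'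
  have hGpos : 0 < Real.Gamma (x + a) := Real.Gamma_pos_of_pos (by linarith)
  have hconv := Real.Gamma_mul_add_mul_le_rpow_Gamma_mul_rpow_Gamma (s := x + a) (t := x + a - 1)
    (by linarith) hw (sub_pos.mpr ha₁) ha₀ (sub_add_cancel 1 a)
  rw [show (1 - a) * (x + a) + a * (x + a - 1) = x by ring,
    show Real.Gamma (x + a - 1) = Real.Gamma (x + a) / (x + a - 1) by rw [hGw]; field_simp,
    Real.div_rpow hGpos.le hw.le, ← mul_div_assoc, ← Real.rpow_add hGpos, sub_add_cancel,
    Real.rpow_one] at hconv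
  rwa [← le_div_iff₀ (by positivity)]

lemma Real.tendsto_Gamma_add_div_Gamma_atTop {a : ℝ} (ha : 0 < a) :
    Tendsto (fun x => Real.Gamma (x + a) / Real.Gamma x) atTop atTop := by
  set b := min a 1
  have hb : 0 < b := lt_min ha one_pos
  have hpow : Tendsto (fun x : ℝ => (x + b - 1) ^ b) atTop atTop := by
    simpa only [Function.comp_def, id, add_sub_assoc] using
      (tendsto_rpow_atTop hb).comp (tendsto_atTop_add_const_right _ (b - 1) tendsto_id)
  refine tendsto_atTop_mono' _ ?_ hpow
  filter_upwards [eventually_ge_atTop 2] with x hx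
  have hmono : Real.Gamma (x + b) ≤ Real.Gamma (x + a) :=
    Real.Gamma_strictMonoOn_Ici.monotoneOn (Set.mem_Ici.mpr (by linarith))
      (Set.mem_Ici.mpr (by linarith)) (by simp [b])
  rw [le_div_iff₀ (Real.Gamma_pos_of_pos (by linarith)), mul_comm]
  exact (Real.Gamma_mul_rpow_le_Gamma_add hb (min_le_right _ _) (by linarith)).trans hmono

lemma Real.summable_pow_div_Gamma_mul_add (Q : ℝ) {a : ℝ} (ha : 0 < a) (b : ℝ) :
    Summable fun k : ℕ => Q ^ k / Real.Gamma (a * k + b) := by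
  have hx : Tendsto (fun k : ℕ => a * k + b) atTop atTop :=
    tendsto_atTop_add_const_right _ _ (tendsto_natCast_atTop_atTop.const_mul_atTop ha)
  refine summable_of_ratio_norm_eventually_le one_half_lt_one ?_
  filter_upwards [hx.eventually_gt_atTop 0,
    ((Real.tendsto_Gamma_add_div_Gamma_atTop ha).comp hx).eventually_ge_atTop (2 * |Q|)]
    with k hpos hratio
  have hG := Real.Gamma_pos_of_pos hpos
  have hsucc : a * ((k + 1 : ℕ) : ℝ) + b = a * k + b + a := by push_cast; ring
  have hG' : 0 < Real.Gamma (a * k + b + a) := Real.Gamma_pos_of_pos (by linarith)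
  rw [Function.comp_apply, le_div_iff₀ hG] at hratio
  simp only [norm_div, norm_pow, Real.norm_eq_abs, hsucc, abs_of_pos hG, abs_of_pos hG']
  rw [div_le_iff₀ hG', pow_succ]
  calc |Q| ^ k * |Q|
      = 1 / 2 * (|Q| ^ k / Real.Gamma (a * k + b)) * (2 * |Q| * Real.Gamma (a * k + b)) := by
        field_simp
    _ ≤ 1 / 2 * (|Q| ^ k / Real.Gamma (a * k + b)) * Real.Gamma (a * k + b + a) := by gcongr

lemma norm_ascPochhammer_eval_le (γ : ℂ) (k : ℕ) :
    ‖(ascPochhammer ℂ k).eval γ‖ ≤ k.factorial * (1 + ‖γ‖) ^ k := by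
  induction k with
  | zero => simp
  | succ k ih =>
    have hfactor : ‖γ + k‖ ≤ (k + 1) * (1 + ‖γ‖) := by
      calc ‖γ + k‖ ≤ ‖γ‖ + k := by simpa using norm_add_le γ k
        _ ≤ (k + 1) * (1 + ‖γ‖) := by nlinarith [norm_nonneg γ, k.cast_nonneg (α := ℝ)]
    rw [ascPochhammer_succ_eval, norm_mul, Nat.factorial_succ, Nat.cast_mul, pow_succ]
    calc _ ≤ (k.factorial * (1 + ‖γ‖) ^ k) * ((k + 1) * (1 + ‖γ‖)) := by gcongr
      _ = _ := by push_cast; ring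

lemma mul_ascPochhammer_eval_add_one {S : Type*} [CommSemiring S] (γ : S) (k : ℕ) :
    γ * (ascPochhammer S k).eval (γ + 1) = (ascPochhammer S k).eval γ * (γ + k) := by
  rw [← ascPochhammer_succ_eval, ascPochhammer_succ_left]
  simp [Polynomial.eval_comp]

lemma Complex.inv_Gamma_sub_one (s : ℂ) : (Gamma (s - 1))⁻¹ = (s - 1) * (Gamma s)⁻¹ := by
  rcases eq_or_ne (s - 1) 0 with hs | hs
  · simp [hs, Complex.Gamma_zero]
  · have h := Complex.Gamma_add_one _ hs
    rw [sub_add_cancel] at h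
    rw [h, mul_inv, ← mul_assoc, mul_inv_cancel₀ hs, one_mul]

noncomputable def prabhakarTerm (α β γ z : ℂ) (k : ℕ) : ℂ :=
  (ascPochhammer ℂ k).eval γ * z ^ k / ((Nat.factorial k : ℂ) * Complex.Gamma (α * k + β))

lemma prabhakar_eq_tsum (α β γ z : ℂ) : prabhakar α β γ z = ∑' k, prabhakarTerm α β γ z k := rfl

lemma prabhakarTerm_add_one (α β γ z : ℂ) (k : ℕ) :
    α * γ * prabhakarTerm α β (γ + 1) z k =
      prabhakarTerm α (β - 1) γ z k + (1 - β + α * γ) * prabhakarTerm α β γ z k := by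
  have hGamma := Complex.inv_Gamma_sub_one (α * k + β)
  rw [add_sub_assoc] at hGamma
  simp only [prabhakarTerm, div_eq_mul_inv, mul_inv, hGamma]
  linear_combination (α * z ^ k * (k.factorial : ℂ)⁻¹ * (Gamma (α * k + β))⁻¹) *
    mul_ascPochhammer_eval_add_one γ k

lemma norm_prabhakarTerm_le (α β γ z : ℂ) {k : ℕ} (hk : 1 ≤ (α * k + β).re) :
    ‖prabhakarTerm α β γ z k‖ ≤ ((1 + ‖γ‖) * ‖z‖) ^ k *
      Real.exp ((α * k + β).im ^ 2 / (α * k + β).re) / Real.Gamma (α * k + β).re := by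
  rw [prabhakarTerm]
  set s := α * k + β
  have hGamma := Real.Gamma_re_le_norm_Gamma_mul_exp s hk
  have hΓ : 0 < Real.Gamma s.re := Real.Gamma_pos_of_pos (by linarith)
  have hΓs : 0 < ‖Complex.Gamma s‖ :=
    pos_of_mul_pos_left (hΓ.trans_le hGamma) (Real.exp_pos _).le
  rw [norm_div, norm_mul, norm_mul, norm_pow, Complex.norm_natCast,
    div_le_div_iff₀ (by positivity) hΓ]
  calc ‖(ascPochhammer ℂ k).eval γ‖ * ‖z‖ ^ k * Real.Gamma s.re
      ≤ (k.factorial * (1 + ‖γ‖) ^ k) * ‖z‖ ^ k *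
          (‖Complex.Gamma s‖ * Real.exp (s.im ^ 2 / s.re)) := by
        gcongr; exact norm_ascPochhammer_eval_le γ k
    _ = _ := by rw [mul_pow]; ring

lemma eventually_im_sq_div_re_le {α : ℂ} (hα : 0 < α.re) (β : ℂ) :
    ∀ᶠ k : ℕ in atTop, (α * k + β).im ^ 2 / (α * k + β).re ≤
      2 * (|α.im| + |β.im|) ^ 2 / α.re * k := by
  have hhalf : Tendsto (fun k : ℕ => α.re * k / 2) atTop atTop :=
    (tendsto_natCast_atTop_atTop.const_mul_atTop hα).atTop_div_const two_pos
  filter_upwards [hhalf.eventually_ge_atTop (-β.re), eventually_ge_atTop 1] with k hβ hk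
  have hk : (1 : ℝ) ≤ k := by exact_mod_cast hk
  have hre : α.re * k / 2 ≤ (α * k + β).re := by
    simp only [add_re, mul_re, natCast_re, natCast_im, mul_zero, sub_zero]
    linarith
  have him : |(α * k + β).im| ≤ (|α.im| + |β.im|) * k := by
    simp only [add_im, mul_im, natCast_re, natCast_im, mul_zero, zero_add]
    calc |α.im * k + β.im| ≤ |α.im| * k + |β.im| := by
          simpa [abs_mul] using abs_add_le (α.im * k) β.im
      _ ≤ (|α.im| + |β.im|) * k := by nlinarith [abs_nonneg β.im]
  rw [div_le_iff₀ (lt_of_lt_of_le (by positivity) hre)]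
  calc (α * k + β).im ^ 2 ≤ ((|α.im| + |β.im|) * k) ^ 2 := by
        rw [← sq_abs]; gcongr
    _ = 2 * (|α.im| + |β.im|) ^ 2 / α.re * k * (α.re * k / 2) := by field_simp
    _ ≤ 2 * (|α.im| + |β.im|) ^ 2 / α.re * k * (α * k + β).re := by gcongr

lemma summable_prabhakarTerm {α : ℂ} (hα : 0 < α.re) (β γ z : ℂ) :
    Summable (prabhakarTerm α β γ z) := by
  set C := 2 * (|α.im| + |β.im|) ^ 2 / α.re
  have hre : Tendsto (fun k : ℕ => (α * k + β).re) atTop atTop := by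
    simpa using tendsto_atTop_add_const_right _ β.re
      (tendsto_natCast_atTop_atTop.const_mul_atTop hα)
  refine .of_norm_bounded_eventually_nat
    (Real.summable_pow_div_Gamma_mul_add ((1 + ‖γ‖) * ‖z‖ * Real.exp C) hα β.re) ?_
  filter_upwards [hre.eventually_ge_atTop 1, eventually_im_sq_div_re_le hα β] with k hk hC
  calc ‖prabhakarTerm α β γ z k‖
      ≤ ((1 + ‖γ‖) * ‖z‖) ^ k * Real.exp ((α * k + β).im ^ 2 / (α * k + β).re) /
          Real.Gamma (α * k + β).re := norm_prabhakarTerm_le α β γ z hk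
    _ ≤ ((1 + ‖γ‖) * ‖z‖) ^ k * Real.exp (k * C) / Real.Gamma (α * k + β).re := by
        gcongr
        exact hC.trans_eq (mul_comm _ _)
    _ = ((1 + ‖γ‖) * ‖z‖ * Real.exp C) ^ k / Real.Gamma (α.re * k + β.re) := by
        simp [Real.exp_nat_mul, mul_pow]

theorem prabhakar_reduction_general (α β γ : ℂ) (hα : 0 < α.re) (hγ : γ ≠ 0) (z : ℂ) :
    prabhakar α β (γ + 1) z =
      (prabhakar α (β - 1) γ z + (1 - β + α * γ) * prabhakar α β γ z) / (α * γ) := by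
  have hα0 : α ≠ 0 := fun h => by simp [h] at hα
  rw [eq_div_iff (mul_ne_zero hα0 hγ), mul_comm, prabhakar_eq_tsum, prabhakar_eq_tsum,
    prabhakar_eq_tsum, ← tsum_mul_left, ← tsum_mul_left,
    ← (summable_prabhakarTerm hα _ γ z).tsum_add ((summable_prabhakarTerm hα β γ z).mul_left _)]
  exact tsum_congr (prabhakarTerm_add_one α β γ z)

theorem prabhakar_reduction (α β γ : ℂ) (hα : 0 < α.re) (hα0 : α ≠ 0) (hγ : γ ≠ 0) (z : ℂ) :
    prabhakar α β (γ + 1) z =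
      (prabhakar α (β - 1) γ z + (1 - β + α * γ) * prabhakar α β γ z) / (α * γ) :=
  prabhakar_reduction_general α β γ hα hγ z
end

section
/- Laplace transform of the generalized Prabhakar kernel: for real α > 0, β > 0, γ ∈ ℂ, z ∈ ℂ, and real s > 0 with s^α > |z|, ∫_0^∞ e^{−st} t^{β−1} E_{α,β}^γ(t^α z) dt = s^{αγ−β} (s^α − z)^{−γ} = s^{−β}(1 − z s^{−α})^{−γ}. -/
/-!
Expand the Prabhakar function into its power series. The `k`-th term of the integrand is a
multiple of `t ^ (α k + β - 1) e^{-st}`, whose Laplace transform `Γ(α k + β) s^{-(α k + β)}`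
cancels the Gamma factor of the coefficient, leaving `s^{-β} (γ)_k / k! · w^k` with
`w = z s^{-α}`. Since `‖w‖ < 1` lies inside the disc of convergence of the binomial series,
these terms are absolutely summable, which justifies exchanging sum and integral, and the sum is
`s^{-β} (1 - w)^{-γ}`.
-/

open scoped Real
open Complex Filter

open MeasureTheory Set

theorem ascPochhammer_eval_div_factorial {K : Type*} [Field K] [CharZero K] (a : K) (n : ℕ) :
    (ascPochhammer K n).eval a / n.factorial = Ring.choose (a + n - 1) n := by
  rw [← Ring.multichoose_eq, div_eq_iff (by exact_mod_cast n.factorial_ne_zero), mul_comm,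
    ← nsmul_eq_mul, Ring.factorial_nsmul_multichoose_eq_ascPochhammer,
    Polynomial.ascPochhammer_smeval_eq_eval]

theorem hasFPowerSeriesOnBall_one_sub_cpow_neg (a : ℂ) :
    HasFPowerSeriesOnBall (fun w ↦ (1 - w) ^ (-a))
      (.ofScalars ℂ fun n ↦ (ascPochhammer ℂ n).eval a / n.factorial) 0 1 := by
  simpa [ascPochhammer_eval_div_factorial, cpow_neg] using
    one_div_one_sub_cpow_hasFPowerSeriesOnBall_zero a

theorem mem_eball_zero_of_norm_lt_one {E : Type*} [SeminormedAddCommGroup E] {x : E}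
    (hx : ‖x‖ < 1) : x ∈ Metric.eball (0 : E) 1 := by
  rw [mem_eball_zero_iff, ← ofReal_norm, ENNReal.ofReal_lt_one]
  exact hx

theorem hasSum_ascPochhammer_div_factorial_mul_pow (a : ℂ) {w : ℂ} (hw : ‖w‖ < 1) :
    HasSum (fun n ↦ (ascPochhammer ℂ n).eval a / n.factorial * w ^ n) ((1 - w) ^ (-a)) := by
  simpa [FormalMultilinearSeries.ofScalars_apply_eq, mul_comm] using
    (hasFPowerSeriesOnBall_one_sub_cpow_neg a).hasSum (mem_eball_zero_of_norm_lt_one hw)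

theorem summable_norm_ascPochhammer_div_factorial_mul_pow (a : ℂ) {w : ℂ} (hw : ‖w‖ < 1) :
    Summable fun n ↦ ‖(ascPochhammer ℂ n).eval a / n.factorial * w ^ n‖ := by
  simpa [FormalMultilinearSeries.ofScalars_apply_eq, mul_comm] using
    FormalMultilinearSeries.summable_norm_apply _
      (Metric.eball_subset_eball (hasFPowerSeriesOnBall_one_sub_cpow_neg a).r_le
        (mem_eball_zero_of_norm_lt_one hw))

namespace Complex

theorem ofReal_mul_cpow {r : ℝ} (hr : 0 < r) (x c : ℂ) :
    ((r : ℂ) * x) ^ c = (r : ℂ) ^ c * x ^ c := by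
  rcases eq_or_ne x 0 with rfl | hx
  · rcases eq_or_ne c 0 with rfl | hc <;> simp [*]
  have hr' : (r : ℂ) ≠ 0 := by exact_mod_cast hr.ne'
  rw [cpow_def_of_ne_zero (mul_ne_zero hr' hx), log_ofReal_mul hr hx, add_mul, exp_add,
    cpow_def_of_ne_zero hr', cpow_def_of_ne_zero hx, ofReal_log hr.le]

theorem ofReal_rpow_cpow {s : ℝ} (hs : 0 < s) (α : ℝ) (c : ℂ) :
    ((s ^ α : ℝ) : ℂ) ^ c = (s : ℂ) ^ ((α : ℂ) * c) := by
  have hs' : (s : ℂ) ≠ 0 := by exact_mod_cast hs.ne'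
  have hsα : ((s ^ α : ℝ) : ℂ) ≠ 0 := by exact_mod_cast (Real.rpow_pos_of_pos hs α).ne'
  rw [cpow_def_of_ne_zero hsα, cpow_def_of_ne_zero hs', ← ofReal_log (Real.rpow_nonneg hs.le α),
    Real.log_rpow hs, ← ofReal_log hs.le]
  push_cast
  ring_nf

theorem cpow_mul_sub_cpow_neg {s : ℝ} (hs : 0 < s) (α β : ℝ) (γ z : ℂ) :
    (s : ℂ) ^ ((α : ℂ) * γ - β) * (((s ^ α : ℝ) : ℂ) - z) ^ (-γ) =
      (s : ℂ) ^ (-(β : ℂ)) * (1 - z * (s : ℂ) ^ (-(α : ℂ))) ^ (-γ) := by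
  have hs' : (s : ℂ) ≠ 0 := by exact_mod_cast hs.ne'
  have hinv : ((s ^ α : ℝ) : ℂ) * (s : ℂ) ^ (-(α : ℂ)) = 1 := by
    rw [← cpow_one (((s ^ α : ℝ) : ℂ)), ofReal_rpow_cpow hs, ← cpow_add _ _ hs']
    simp
  have hfactor : ((s ^ α : ℝ) : ℂ) - z = ((s ^ α : ℝ) : ℂ) * (1 - z * (s : ℂ) ^ (-(α : ℂ))) := by
    linear_combination z * hinv
  rw [hfactor, ofReal_mul_cpow (Real.rpow_pos_of_pos hs α), ofReal_rpow_cpow hs, ← mul_assoc,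
    ← cpow_add _ _ hs']
  ring_nf

end Complex

theorem integral_tsum_mul_rpow_mul_exp_neg_mul_Ioi {c : ℕ → ℂ} {a : ℕ → ℝ} {s : ℝ} (hs : 0 < s)
    (ha : ∀ k, 0 < a k)
    (hsum : Summable fun k ↦ ‖c k * (((1 / s) ^ a k * Real.Gamma (a k) : ℝ) : ℂ)‖) :
    ∫ t in Ioi 0, ∑' k, c k * ((t ^ (a k - 1) * Real.exp (-(s * t)) : ℝ) : ℂ) =
      ∑' k, c k * (((1 / s) ^ a k * Real.Gamma (a k) : ℝ) : ℂ) := by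
  have hlaplace k := Real.integral_rpow_mul_exp_neg_mul_Ioi (ha k) hs
  have hpos k : 0 < (1 / s) ^ a k * Real.Gamma (a k) :=
    mul_pos (Real.rpow_pos_of_pos (one_div_pos.2 hs) _) (Real.Gamma_pos_of_pos (ha k))
  have hint k : IntegrableOn (fun t : ℝ ↦ t ^ (a k - 1) * Real.exp (-(s * t))) (Ioi 0) :=
    .of_integral_ne_zero <| by rw [hlaplace]; exact (hpos k).ne'
  have hnorm k : ∫ t in Ioi 0, ‖c k * ((t ^ (a k - 1) * Real.exp (-(s * t)) : ℝ) : ℂ)‖ =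
      ‖c k * (((1 / s) ^ a k * Real.Gamma (a k) : ℝ) : ℂ)‖ := by
    rw [norm_mul, norm_real, Real.norm_of_nonneg (hpos k).le, ← hlaplace,
      ← integral_const_mul]
    refine setIntegral_congr_fun measurableSet_Ioi fun t (ht : 0 < t) ↦ ?_
    rw [norm_mul, norm_real, Real.norm_of_nonneg (by positivity)]
  refine (integral_tsum_of_summable_integral_norm (fun k ↦ ((hint k).ofReal).const_mul (c k))
    (hsum.congr fun k ↦ (hnorm k).symm)).symm.trans (tsum_congr fun k ↦ ?_)
  rw [integral_const_mul, integral_ofReal, hlaplace]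
  rfl

theorem cexp_mul_rpow_mul_prabhakar_eq_tsum {t : ℝ} (ht : 0 < t) (α β s : ℝ) (γ z : ℂ) :
    cexp (-(s : ℂ) * t) * ((t ^ (β - 1) : ℝ) : ℂ) * prabhakar α β γ (((t ^ α : ℝ) : ℂ) * z) =
      ∑' k : ℕ, (ascPochhammer ℂ k).eval γ / k.factorial * z ^ k / Gamma (α * k + β) *
        ((t ^ (α * k + β - 1) * Real.exp (-(s * t)) : ℝ) : ℂ) := by
  rw [prabhakar, ← tsum_mul_left]
  refine tsum_congr fun k ↦ ?_
  have hpow : t ^ (α * k + β - 1) = t ^ (β - 1) * (t ^ α) ^ k := by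
    rw [← Real.rpow_natCast, ← Real.rpow_mul ht.le, ← Real.rpow_add ht]
    ring_nf
  rw [hpow, neg_mul]
  push_cast
  ring

theorem prabhakar_coeff_mul_laplace_rpow {s : ℝ} (hs : 0 < s) {α β : ℝ} {k : ℕ}
    (hk : 0 < α * k + β) (γ z : ℂ) :
    (ascPochhammer ℂ k).eval γ / k.factorial * z ^ k / Gamma (α * k + β) *
        (((1 / s) ^ (α * k + β) * Real.Gamma (α * k + β) : ℝ) : ℂ) =
      (s : ℂ) ^ (-(β : ℂ)) *
        ((ascPochhammer ℂ k).eval γ / k.factorial * (z * (s : ℂ) ^ (-(α : ℂ))) ^ k) := by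
  have hΓ : Gamma (α * k + β) = (Real.Gamma (α * k + β) : ℂ) := by
    rw [← Gamma_ofReal]
    push_cast
    rfl
  have hΓ0 : (Real.Gamma (α * k + β) : ℂ) ≠ 0 := by
    exact_mod_cast (Real.Gamma_pos_of_pos hk).ne'
  have hsplit : (1 / s) ^ (α * k + β) = s ^ (-β) * (s ^ (-α)) ^ k := by
    rw [← Real.rpow_natCast, ← Real.rpow_mul hs.le, ← Real.rpow_add hs, one_div,
      Real.inv_rpow hs.le, ← Real.rpow_neg hs.le]
    ring_nf
  rw [hΓ, hsplit]
  push_cast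
  rw [ofReal_cpow hs.le, ofReal_cpow hs.le]
  field_simp
  push_cast
  ring

theorem prabhakar_laplace (α β : ℝ) (hα : 0 < α) (hβ : 0 < β) (γ z : ℂ)
    (s : ℝ) (hs : 0 < s) (hsz : ‖z‖ < s ^ α) :
    (∫ t in Set.Ioi (0:ℝ),
        Complex.exp (-(s : ℂ) * t) * ((t ^ (β - 1) : ℝ) : ℂ) *
          prabhakar α β γ (((t ^ α : ℝ) : ℂ) * z)) =
      (s : ℂ) ^ ((α : ℂ) * γ - β) * (((s ^ α : ℝ) : ℂ) - z) ^ (-γ)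
    ∧ (s : ℂ) ^ ((α : ℂ) * γ - β) * (((s ^ α : ℝ) : ℂ) - z) ^ (-γ) =
      (s : ℂ) ^ (-(β : ℂ)) * (1 - z * (s : ℂ) ^ (-(α : ℂ))) ^ (-γ) := by
  set w := z * (s : ℂ) ^ (-(α : ℂ))
  have hw : ‖w‖ < 1 := by
    rw [norm_mul, norm_cpow_eq_rpow_re_of_pos hs, neg_re, ofReal_re, Real.rpow_neg hs.le,
      ← div_eq_mul_inv, div_lt_one (Real.rpow_pos_of_pos hs α)]
    exact hsz
  have hk (k : ℕ) : 0 < α * k + β := by positivity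
  refine ⟨?_, cpow_mul_sub_cpow_neg hs α β γ z⟩
  rw [cpow_mul_sub_cpow_neg hs, setIntegral_congr_fun measurableSet_Ioi
      fun t (ht : 0 < t) ↦ cexp_mul_rpow_mul_prabhakar_eq_tsum ht α β s γ z,
    integral_tsum_mul_rpow_mul_exp_neg_mul_Ioi hs hk, tsum_congr fun k ↦
      prabhakar_coeff_mul_laplace_rpow hs (hk k) γ z, tsum_mul_left,
    (hasSum_ascPochhammer_div_factorial_mul_pow γ hw).tsum_eq]
  simpa only [prabhakar_coeff_mul_laplace_rpow hs (hk _), norm_mul] using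
    (summable_norm_ascPochhammer_div_factorial_mul_pow γ hw).mul_left _
end

section
/- The first coefficients of the large-s inverse factorial expansion: with ψ = 1 − γ + β, the function F(s) = Γ(γ+s)Γ(αs+ψ)/(Γ(s+1)Γ(αs+β)) satisfies F(s) = α^{1−γ}(1 + c₁/(αs+ψ) + O(s^{−2})) as s → ∞ along the positive reals, where c₁ = (γ−1)(αγ + γ − 2β)/2. -/
open scoped Real
open Complex Filter

/-!
Write `G(x) = log Γ(x+a) - log Γ(x+b) - (a-b) log x`. By `Γ(y+1) = y Γ(y)` the increment
`G(y) - G(y+1)` is the elementary `logGammaRatioStep a b y`, and second-order Taylor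
expansion of `log` shows it equals `c (1/y - 1/(y+1)) + O(y⁻³)` with `c = (a-b)(a+b-1)/2`.
The Euler limit formula for `log Γ` sums the increments over `y = x, x+1, …` to `G(x)`; the
main terms telescope to `c/x` and the errors sum to `O(x⁻²)`. Exponentiating,
`Γ(x+a)/Γ(x+b) · x^(b-a) = 1 + c/x + O(x⁻²)`.

The function of the theorem is `α^(1-γ) P(s) Q(αs)`, with `P`, `Q` these normalised ratios for
`(a, b) = (γ, 1)` and `(ψ, β)`. Multiplying the two expansions, the first-order coefficients add
up to `c₁/α`, and replacing `1/s` by `α/(αs+ψ)` costs only `O(s⁻²)`.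
-/

open Finset Asymptotics Topology

theorem abs_log_one_add_sub_le {u : ℝ} (hu : |u| ≤ 1 / 2) :
    |Real.log (1 + u) - (u - u ^ 2 / 2)| ≤ 2 * |u| ^ 3 := by
  have h := Real.abs_log_sub_add_sum_range_le (x := -u) (by rw [abs_neg]; linarith) 2
  norm_num [sum_range_succ] at h
  calc |Real.log (1 + u) - (u - u ^ 2 / 2)| = |-u + u ^ 2 / 2 + Real.log (1 + u)| := by ring_nf
    _ ≤ |u| ^ 3 / (1 - |u|) := h
    _ ≤ 2 * |u| ^ 3 := by
        rw [div_le_iff₀ (by linarith)]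
        nlinarith [mul_nonneg (pow_nonneg (abs_nonneg u) 3) (by linarith : 0 ≤ 1 / 2 - |u|)]

theorem abs_log_add_sub_log_sub_le {y t : ℝ} (hy : 0 < y) (ht : 2 * |t| ≤ y) :
    |Real.log (y + t) - Real.log y - (t / y - t ^ 2 / (2 * y ^ 2))| ≤ 2 * |t| ^ 3 / y ^ 3 := by
  have hu : |t / y| ≤ 1 / 2 := by
    rw [abs_div, abs_of_pos hy, div_le_iff₀ hy]; linarith
  have hyt : 0 < y + t := by linarith [neg_abs_le t]
  have hlog : Real.log (y + t) - Real.log y = Real.log (1 + t / y) := by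
    rw [← Real.log_div hyt.ne' hy.ne', add_div, div_self hy.ne']
  have h := abs_log_one_add_sub_le hu
  rw [abs_div, abs_of_pos hy, div_pow, div_pow] at h
  rw [hlog]
  convert h using 3
  · field_simp
  · ring

noncomputable def gammaRatioCoeff (a b : ℝ) : ℝ := (a - b) * (a + b - 1) / 2

noncomputable def logGammaRatioStep (a b y : ℝ) : ℝ :=
  (a - b) * (Real.log (y + 1) - Real.log y) - (Real.log (y + a) - Real.log (y + b))

theorem exists_abs_logGammaRatioStep_sub_le (a b : ℝ) :
    ∃ K, 0 ≤ K ∧ ∀ y, 2 + 2 * |a| + 2 * |b| ≤ y →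
      |logGammaRatioStep a b y - gammaRatioCoeff a b * (y⁻¹ - (y + 1)⁻¹)| ≤ K / y ^ 3 := by
  set c := gammaRatioCoeff a b
  refine ⟨2 * |a - b| + 2 * |a| ^ 3 + 2 * |b| ^ 3 + |c|, by positivity, fun y hy => ?_⟩
  have hy0 : 0 < y := by linarith [abs_nonneg a, abs_nonneg b]
  have h1 := abs_log_add_sub_log_sub_le hy0 (t := 1)
    (by rw [abs_one]; linarith [abs_nonneg a, abs_nonneg b])
  have ha := abs_log_add_sub_log_sub_le hy0 (t := a) (by linarith [abs_nonneg b])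
  have hb := abs_log_add_sub_log_sub_le hy0 (t := b) (by linarith [abs_nonneg a])
  set E₁ := Real.log (y + 1) - Real.log y - (1 / y - 1 ^ 2 / (2 * y ^ 2))
  set E_a := Real.log (y + a) - Real.log y - (a / y - a ^ 2 / (2 * y ^ 2))
  set E_b := Real.log (y + b) - Real.log y - (b / y - b ^ 2 / (2 * y ^ 2))
  have hab : |(a - b) * E₁| ≤ 2 * |a - b| / y ^ 3 := by
    rw [abs_mul, mul_comm 2, mul_div_assoc]
    exact mul_le_mul_of_nonneg_left (by simpa using h1) (abs_nonneg _)
  have hc : |c / (y ^ 2 * (y + 1))| ≤ |c| / y ^ 3 := by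
    have hpos : 0 < y ^ 2 * (y + 1) := mul_pos (pow_pos hy0 2) (by linarith)
    rw [abs_div, abs_of_pos hpos]
    gcongr
    nlinarith
  -- the second-order terms of the three expansions add up to `c / y ^ 2`
  have hsplit : logGammaRatioStep a b y - c * (y⁻¹ - (y + 1)⁻¹)
      = (a - b) * E₁ - E_a + E_b + c / (y ^ 2 * (y + 1)) := by
    simp only [E₁, E_a, E_b, c, logGammaRatioStep, gammaRatioCoeff]
    field_simp
    ring
  rw [hsplit, add_div, add_div, add_div]
  refine (abs_add_le _ _).trans (add_le_add ((abs_add_le _ _).trans (add_le_add ?_ hb)) hc)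
  exact (abs_sub _ _).trans (add_le_add hab ha)

theorem sum_range_succ_logGammaRatioStep (a b x : ℝ) (n : ℕ) :
    ∑ m ∈ range (n + 1), logGammaRatioStep a b (x + m) =
      Real.BohrMollerup.logGammaSeq (x + a) n - Real.BohrMollerup.logGammaSeq (x + b) n
        - (a - b) * Real.log x + (a - b) * (Real.log (n + (x + 1)) - Real.log n) := by
  have htel : ∑ m ∈ range (n + 1), (Real.log (x + m + 1) - Real.log (x + m))
      = Real.log (n + (x + 1)) - Real.log x := by
    have := sum_range_sub (fun m : ℕ => Real.log (x + m)) (n + 1)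
    push_cast at this
    simp only [← add_assoc] at this
    rw [this, add_zero]
    ring_nf
  have hshift (c : ℝ) : ∑ m ∈ range (n + 1), Real.log (x + m + c)
      = ∑ m ∈ range (n + 1), Real.log (x + c + m) :=
    sum_congr rfl fun m _ => by rw [add_right_comm]
  simp only [logGammaRatioStep, Real.BohrMollerup.logGammaSeq]
  rw [sum_sub_distrib, ← mul_sum, htel, sum_sub_distrib, hshift, hshift]
  ring

theorem tendsto_sum_range_logGammaRatioStep {a b x : ℝ} (hxa : 0 < x + a) (hxb : 0 < x + b) :
    Tendsto (fun n => ∑ m ∈ range n, logGammaRatioStep a b (x + m)) atTop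
      (𝓝 (Real.log (Real.Gamma (x + a)) - Real.log (Real.Gamma (x + b))
        - (a - b) * Real.log x)) := by
  rw [← tendsto_add_atTop_iff_nat 1]
  have hlog := (Real.tendsto_log_comp_add_sub_log (x + 1)).comp tendsto_natCast_atTop_atTop
  have h := (((Real.BohrMollerup.tendsto_log_gamma hxa).sub
    (Real.BohrMollerup.tendsto_log_gamma hxb)).sub_const ((a - b) * Real.log x)).add
    (hlog.const_mul (a - b))
  rw [mul_zero, add_zero] at h
  exact h.congr fun n => (sum_range_succ_logGammaRatioStep a b x n).symm

theorem inv_pow_three_le_two_mul_sub {y : ℝ} (hy : 1 ≤ y) :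
    (y ^ 3)⁻¹ ≤ 2 * ((y ^ 2)⁻¹ - ((y + 1) ^ 2)⁻¹) := by
  have hy0 : 0 < y := by linarith
  rw [inv_sub_inv (by positivity) (by positivity), ← mul_div_assoc, inv_eq_one_div,
    div_le_div_iff₀ (by positivity) (by positivity)]
  nlinarith [pow_pos hy0 3, pow_pos hy0 4]

theorem exists_abs_sum_logGammaRatioStep_sub_le (a b : ℝ) :
    ∃ K, ∀ x, 2 + 2 * |a| + 2 * |b| ≤ x → ∀ n : ℕ,
      |∑ m ∈ range n, (logGammaRatioStep a b (x + m)
        - gammaRatioCoeff a b * ((x + m)⁻¹ - (x + m + 1)⁻¹))| ≤ K / x ^ 2 := by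
  obtain ⟨K, hK0, hK⟩ := exists_abs_logGammaRatioStep_sub_le a b
  refine ⟨2 * K, fun x hx n => ?_⟩
  have hterm (m : ℕ) : |logGammaRatioStep a b (x + m)
      - gammaRatioCoeff a b * ((x + m)⁻¹ - (x + m + 1)⁻¹)|
      ≤ 2 * K * (((x + m) ^ 2)⁻¹ - ((x + (m + 1 : ℕ)) ^ 2)⁻¹) := by
    have hxm : 2 + 2 * |a| + 2 * |b| ≤ x + m := by linarith [m.cast_nonneg (α := ℝ)]
    calc _ ≤ K * ((x + m) ^ 3)⁻¹ := (hK _ hxm).trans_eq (div_eq_mul_inv _ _)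
      _ ≤ K * (2 * (((x + m) ^ 2)⁻¹ - ((x + m + 1) ^ 2)⁻¹)) :=
        mul_le_mul_of_nonneg_left
          (inv_pow_three_le_two_mul_sub (by linarith [abs_nonneg a, abs_nonneg b])) hK0
      _ = _ := by push_cast; ring
  calc _ ≤ ∑ m ∈ range n, 2 * K * (((x + m) ^ 2)⁻¹ - ((x + (m + 1 : ℕ)) ^ 2)⁻¹) :=
        (abs_sum_le_sum_abs _ _).trans (sum_le_sum fun m _ => hterm m)
    _ = 2 * K * ((x ^ 2)⁻¹ - ((x + n) ^ 2)⁻¹) := by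
        rw [← mul_sum, sum_range_sub' (fun m : ℕ => ((x + m) ^ 2)⁻¹)]
        simp
    _ ≤ 2 * K / x ^ 2 := by
        rw [div_eq_mul_inv]
        have : 0 ≤ ((x + n) ^ 2)⁻¹ := by positivity
        nlinarith

theorem isBigO_inv_sq_inv_atTop : (fun x : ℝ => (x ^ 2)⁻¹) =O[atTop] fun x => x⁻¹ := by
  simpa [sq, mul_inv] using
    (isBigO_refl (fun x : ℝ => x⁻¹) atTop).mul (tendsto_inv_atTop_zero.isBigO_one ℝ)

theorem isBigO_log_Gamma_ratio_sub (a b : ℝ) :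
    (fun x => Real.log (Real.Gamma (x + a)) - Real.log (Real.Gamma (x + b)) - (a - b) * Real.log x
      - gammaRatioCoeff a b / x) =O[atTop] fun x => (x ^ 2)⁻¹ := by
  obtain ⟨K, hK⟩ := exists_abs_sum_logGammaRatioStep_sub_le a b
  set c := gammaRatioCoeff a b
  refine IsBigO.of_bound K ?_
  filter_upwards [eventually_ge_atTop (2 + 2 * |a| + 2 * |b|), eventually_gt_atTop (-a),
    eventually_gt_atTop (-b)] with x hx hxa hxb
  have htel (n : ℕ) :
      ∑ m ∈ range n, c * ((x + m)⁻¹ - (x + m + 1)⁻¹) = c * (x⁻¹ - (x + n)⁻¹) := by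
    have := sum_range_sub' (fun m : ℕ => (x + m)⁻¹) n
    simp only [Nat.cast_add, Nat.cast_one, ← add_assoc, Nat.cast_zero, add_zero] at this
    rw [← mul_sum, this]
  have hinv : Tendsto (fun n : ℕ => c * (x⁻¹ - (x + n)⁻¹)) atTop (𝓝 (c / x)) := by
    have := (tendsto_atTop_add_const_left _ x tendsto_natCast_atTop_atTop).inv_tendsto_atTop
    simpa [div_eq_mul_inv] using (this.const_sub x⁻¹).const_mul c
  have hlim := ((tendsto_sum_range_logGammaRatioStep (neg_lt_iff_pos_add.mp hxa)
    (neg_lt_iff_pos_add.mp hxb)).sub hinv).abs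
  rw [Real.norm_eq_abs, norm_inv, norm_pow, Real.norm_eq_abs, sq_abs, ← div_eq_mul_inv]
  refine le_of_tendsto hlim (Eventually.of_forall fun n => ?_)
  simpa only [← htel, ← sum_sub_distrib] using hK x hx n

theorem isBigO_Gamma_ratio (a b : ℝ) :
    (fun x => Real.Gamma (x + a) / Real.Gamma (x + b) * x ^ (b - a)
      - (1 + gammaRatioCoeff a b / x))
      =O[atTop] fun x => (x ^ 2)⁻¹ := by
  set G := fun x =>
    Real.log (Real.Gamma (x + a)) - Real.log (Real.Gamma (x + b)) - (a - b) * Real.log x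
  have hG := isBigO_log_Gamma_ratio_sub a b
  have hG₁ : G =O[atTop] fun x => x⁻¹ := by
    have hc : (fun x : ℝ => gammaRatioCoeff a b / x) =O[atTop] fun x => x⁻¹ := by
      simpa only [div_eq_mul_inv] using (isBigO_refl (fun x : ℝ => x⁻¹) atTop).const_mul_left _
    simpa using (hG.trans isBigO_inv_sq_inv_atTop).add hc
  have hG₀ : Tendsto G atTop (𝓝 0) := hG₁.trans_tendsto tendsto_inv_atTop_zero
  have hexp : (fun x => Real.exp (G x) - 1 - G x) =O[atTop] fun x => (x ^ 2)⁻¹ := by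
    have hsq : (fun x => G x ^ 2) =O[atTop] fun x => (x ^ 2)⁻¹ := by
      simpa only [inv_pow] using hG₁.pow 2
    refine IsBigO.trans (IsBigO.of_bound 1 ?_) hsq
    filter_upwards [(hG₀.eventually (Metric.closedBall_mem_nhds 0 one_pos))] with x hx
    simpa [Real.norm_eq_abs] using Real.abs_exp_sub_one_sub_id_le (by simpa using hx)
  refine (hexp.add hG).congr' ?_ EventuallyEq.rfl
  filter_upwards [eventually_gt_atTop 0, eventually_gt_atTop (-a), eventually_gt_atTop (-b)]
    with x hx hxa hxb
  have hratio : Real.Gamma (x + a) / Real.Gamma (x + b) * x ^ (b - a) = Real.exp (G x) := by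
    simp only [G, Real.exp_sub, Real.exp_log (Real.Gamma_pos_of_pos (by linarith : 0 < x + a)),
      Real.exp_log (Real.Gamma_pos_of_pos (by linarith : 0 < x + b)), Real.rpow_def_of_pos hx]
    rw [div_eq_mul_inv _ (Real.exp _), ← Real.exp_neg]
    ring_nf
  rw [hratio]
  ring

theorem isBigO_mul_sub_one_add_div {f g : ℝ → ℝ} {u v : ℝ}
    (hf : (fun x => f x - (1 + u / x)) =O[atTop] fun x => (x ^ 2)⁻¹)
    (hg : (fun x => g x - (1 + v / x)) =O[atTop] fun x => (x ^ 2)⁻¹) :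
    (fun x => f x * g x - (1 + (u + v) / x)) =O[atTop] fun x => (x ^ 2)⁻¹ := by
  have hbdd (w : ℝ) : (fun x : ℝ => 1 + w / x) =O[atTop] fun _ => (1 : ℝ) :=
    (tendsto_const_nhds.add (tendsto_const_nhds.div_atTop tendsto_id)).isBigO_one ℝ
  have hsq : (fun x : ℝ => (x ^ 2)⁻¹) =O[atTop] fun _ => (1 : ℝ) :=
    (tendsto_inv_atTop_zero.comp (tendsto_pow_atTop two_ne_zero)).isBigO_one ℝ
  have hg₁ : g =O[atTop] fun _ => (1 : ℝ) := by
    simpa using (hg.trans hsq).add (hbdd v)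
  have h₁ : (fun x => (f x - (1 + u / x)) * g x) =O[atTop] fun x => (x ^ 2)⁻¹ := by
    simpa using hf.mul hg₁
  have h₂ : (fun x => (1 + u / x) * (g x - (1 + v / x))) =O[atTop] fun x => (x ^ 2)⁻¹ := by
    simpa using (hbdd u).mul hg
  have h₃ := (isBigO_refl (fun x : ℝ => (x ^ 2)⁻¹) atTop).const_mul_left (u * v)
  exact ((h₁.add h₂).add h₃).congr_left fun x => by ring

theorem Asymptotics.IsBigO.comp_const_mul_inv_sq {f : ℝ → ℝ} {α : ℝ} (hα : 0 < α)
    (hf : f =O[atTop] fun x => (x ^ 2)⁻¹) :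
    (fun s => f (α * s)) =O[atTop] fun s => (s ^ 2)⁻¹ := by
  refine (hf.comp_tendsto (tendsto_id.const_mul_atTop hα)).trans ?_
  simpa [Function.comp_def, mul_pow, mul_inv, mul_comm] using
    (isBigO_refl (fun s : ℝ => (s ^ 2)⁻¹) atTop).const_mul_left ((α ^ 2)⁻¹)

theorem isBigO_inv_sub_inv_add (d : ℝ) :
    (fun x : ℝ => x⁻¹ - (x + d)⁻¹) =O[atTop] fun x => (x ^ 2)⁻¹ := by
  refine IsBigO.of_bound (2 * |d|) ?_
  filter_upwards [eventually_ge_atTop (2 * |d| + 1)] with x hx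
  have hx0 : 0 < x := by linarith [abs_nonneg d]
  have hxd : x ≤ 2 * (x + d) := by linarith [neg_abs_le d]
  rw [inv_sub_inv hx0.ne' (by linarith), Real.norm_eq_abs, Real.norm_eq_abs,
    abs_of_pos (by positivity : 0 < (x ^ 2)⁻¹), abs_div,
    abs_of_pos (by nlinarith : 0 < x * (x + d)),
    add_sub_cancel_left, div_le_iff₀ (by nlinarith), mul_assoc]
  rw [show (x ^ 2)⁻¹ * (x * (x + d)) = (x + d) / x by field_simp, mul_div_assoc',
    le_div_iff₀ hx0]
  nlinarith [mul_le_mul_of_nonneg_left hxd (abs_nonneg d)]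

theorem inverse_factorial_expansion_first_coeff_general (α β γ : ℝ) (hα : 0 < α) :
    (fun s : ℝ =>
        Real.Gamma (γ + s) * Real.Gamma (α * s + (1 - γ + β)) /
            (Real.Gamma (s + 1) * Real.Gamma (α * s + β)) -
          α ^ (1 - γ) *
            (1 + (γ - 1) * (α * γ + γ - 2 * β) / 2 / (α * s + (1 - γ + β)))) =O[atTop]
      fun s : ℝ => s ^ (-2 : ℝ) := by
  set ψ := 1 - γ + β
  set c := (γ - 1) * (α * γ + γ - 2 * β) / 2
  have hQ : (fun s => Real.Gamma (α * s + ψ) / Real.Gamma (α * s + β) * (α * s) ^ (β - ψ)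
      - (1 + gammaRatioCoeff ψ β / α / s)) =O[atTop] fun s => (s ^ 2)⁻¹ :=
    ((isBigO_Gamma_ratio ψ β).comp_const_mul_inv_sq hα).congr_left fun s => by rw [div_div]
  have hPQ := isBigO_mul_sub_one_add_div (isBigO_Gamma_ratio γ 1) hQ
  have hshift := (isBigO_inv_sub_inv_add (ψ / α)).const_mul_left (c / α)
  have hrpow : (fun s : ℝ => (s ^ 2)⁻¹) =O[atTop] fun s => s ^ (-2 : ℝ) := by
    refine EventuallyEq.isBigO ?_
    filter_upwards [eventually_ge_atTop 0] with s hs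
    rw [Real.rpow_neg hs, Real.rpow_two]
  refine (((hPQ.add hshift).const_mul_left (α ^ (1 - γ))).trans hrpow).congr' ?_ EventuallyEq.rfl
  filter_upwards [eventually_gt_atTop 0] with s hs
  have hcoeff : gammaRatioCoeff γ 1 + gammaRatioCoeff ψ β / α = c / α := by
    simp only [gammaRatioCoeff, ψ, c]
    field_simp
    ring
  have hpow : α ^ (1 - γ) * (s ^ (1 - γ) * (α * s) ^ (β - ψ)) = 1 := by
    rw [Real.mul_rpow hα.le hs.le, show β - ψ = -(1 - γ) by ring, Real.rpow_neg hα.le,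
      Real.rpow_neg hs.le]
    field_simp
  have hc : c / (α * s + ψ) = c / α * (s + ψ / α)⁻¹ := by
    field_simp
  rw [hcoeff, hc, add_comm γ s]
  -- `hpow` is the cancellation of powers in `F(s) = α^(1-γ) P(s) Q(αs)`
  linear_combination (Real.Gamma (s + γ) * Real.Gamma (α * s + ψ) /
    (Real.Gamma (s + 1) * Real.Gamma (α * s + β))) * hpow

theorem inverse_factorial_expansion_first_coeff (α β γ : ℝ) (hα : 0 < α)
    (hγ : ∀ n : ℕ, γ ≠ -(n : ℝ)) :
    (fun s : ℝ =>
        Real.Gamma (γ + s) * Real.Gamma (α * s + (1 - γ + β)) /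
            (Real.Gamma (s + 1) * Real.Gamma (α * s + β)) -
          α ^ (1 - γ) *
            (1 + (γ - 1) * (α * γ + γ - 2 * β) / 2 / (α * s + (1 - γ + β)))) =O[atTop]
      fun s : ℝ => s ^ (-2 : ℝ) :=
  inverse_factorial_expansion_first_coeff_general α β γ hα
end
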